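/- arXiv:2209.02457 — 3 statements merged into one kernel-verified Lean document; each statement's English description precedes it below -/
import Mathlib

section
/- For unit vectors w₁, w₂, w₃ ∈ ℂ² with modified Hopf images x₁, x₂, x₃ ∈ S² ⊂ ℝ³, one has ⟨w₁,w₂⟩⟨w₂,w₃⟩⟨w₃,w₁⟩ = (1/4)(1 + ⟨x₁,x₂⟩ + ⟨x₁,x₃⟩ + ⟨x₂,x₃⟩) + (i/4)·det(x₁,x₂,x₃), where det(x₁,x₂,x₃) is the determinant of the 3×3 real matrix with columns x₁, x₂, x₃. -/
open Matrix Complex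

noncomputable def pauli1 : Matrix (Fin 2) (Fin 2) ℂ := !![0, 1; 1, 0]
noncomputable def pauli2 : Matrix (Fin 2) (Fin 2) ℂ := !![0, -Complex.I; Complex.I, 0]
noncomputable def pauli3 : Matrix (Fin 2) (Fin 2) ℂ := !![1, 0; 0, -1]

/-- `x · σ` for `x ∈ ℝ³`. -/
noncomputable def dotPauli (x : Fin 3 → ℝ) : Matrix (Fin 2) (Fin 2) ℂ :=
  (x 0 : ℂ) • pauli1 + (x 1 : ℂ) • pauli2 + (x 2 : ℂ) • pauli3

/-- Standard Hermitian inner product on ℂ², linear in the first argument. -/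
noncomputable def hermInner (w₁ w₂ : Fin 2 → ℂ) : ℂ := ∑ i, w₁ i * star (w₂ i)

/-- The outer product `w w*`. -/
noncomputable def outer (w : Fin 2 → ℂ) : Matrix (Fin 2) (Fin 2) ℂ :=
  Matrix.vecMulVec w (star w)

theorem triple_product_formula
    (w₁ w₂ w₃ : Fin 2 → ℂ) (x₁ x₂ x₃ : Fin 3 → ℝ)
    (hw₁ : hermInner w₁ w₁ = 1) (hw₂ : hermInner w₂ w₂ = 1) (hw₃ : hermInner w₃ w₃ = 1)
    (hx₁ : outer w₁ = ((1 : ℂ)/2) • (1 - dotPauli x₁))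
    (hx₂ : outer w₂ = ((1 : ℂ)/2) • (1 - dotPauli x₂))
    (hx₃ : outer w₃ = ((1 : ℂ)/2) • (1 - dotPauli x₃)) :
    hermInner w₁ w₂ * hermInner w₂ w₃ * hermInner w₃ w₁ =
      ((1 : ℂ)/4) * (1 + (∑ i, x₁ i * x₂ i : ℝ) + (∑ i, x₁ i * x₃ i : ℝ)
          + (∑ i, x₂ i * x₃ i : ℝ))
      + (Complex.I/4) *
          ((Matrix.of fun i j => ![x₁, x₂, x₃] j i : Matrix (Fin 3) (Fin 3) ℝ).det : ℝ) := by
  have key : hermInner w₁ w₂ * hermInner w₂ w₃ * hermInner w₃ w₁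
      = Matrix.trace (outer w₁ * outer w₃ * outer w₂) := by
    simp [hermInner, outer, Matrix.trace, Matrix.mul_apply, Matrix.vecMulVec_apply,
      Fin.sum_univ_two, Matrix.diag]
    ring
  rw [key, hx₁, hx₂, hx₃]
  simp [dotPauli, pauli1, pauli2, pauli3, Matrix.trace, Matrix.mul_apply, Fin.sum_univ_two,
    Fin.sum_univ_three, Matrix.det_fin_three, Matrix.smul_apply, Matrix.sub_apply,
    Matrix.one_apply, Matrix.diag]
  ring_nf
  simp only [Complex.I_sq]
  ring
end

section
/- For unit vectors w₁, w₂, w₃ ∈ ℂ² with modified Hopf images x₁, x₂, x₃ ∈ S² ⊂ ℝ³, the real part of ⟨w₁,w₂⟩⟨w₂,w₃⟩⟨w₃,w₁⟩ equals (1/2)(−1 + ρ₁₂ + ρ₁₃ + ρ₂₃), where ρᵢⱼ = (1 + ⟨xᵢ,xⱼ⟩)/2. -/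
open Matrix Complex

theorem re_triple_product_formula
    (w₁ w₂ w₃ : Fin 2 → ℂ) (x₁ x₂ x₃ : Fin 3 → ℝ)
    (hw₁ : hermInner w₁ w₁ = 1) (hw₂ : hermInner w₂ w₂ = 1) (hw₃ : hermInner w₃ w₃ = 1)
    (hx₁ : outer w₁ = ((1 : ℂ)/2) • (1 - dotPauli x₁))
    (hx₂ : outer w₂ = ((1 : ℂ)/2) • (1 - dotPauli x₂))
    (hx₃ : outer w₃ = ((1 : ℂ)/2) • (1 - dotPauli x₃)) :
    (hermInner w₁ w₂ * hermInner w₂ w₃ * hermInner w₃ w₁).re =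
      (1/2) * (-1 + (1 + ∑ i, x₁ i * x₂ i)/2 + (1 + ∑ i, x₁ i * x₃ i)/2
        + (1 + ∑ i, x₂ i * x₃ i)/2) := by
  have key : hermInner w₁ w₂ * hermInner w₂ w₃ * hermInner w₃ w₁ =
      Matrix.trace (outer w₁ * outer w₃ * outer w₂) := by
    simp [hermInner, outer, Matrix.trace, Matrix.mul_apply, Matrix.vecMulVec_apply,
      Fin.sum_univ_two, Matrix.diag]
    ring
  rw [key, hx₁, hx₂, hx₃]
  simp [Matrix.trace, Matrix.mul_apply, dotPauli, pauli1, pauli2, pauli3,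
    Fin.sum_univ_two, Fin.sum_univ_three, Matrix.diag, Matrix.one_apply,
    Complex.add_re, Complex.sub_re, Complex.mul_re, Complex.mul_im,
    Complex.add_im, Complex.sub_im, Complex.I_re, Complex.I_im,
    Complex.ofReal_re, Complex.ofReal_im, Complex.div_re, Complex.div_im,
    Complex.normSq]
  ring
end

section
/- Let μ₁, μ₂, μ₃, ρ₁, ρ₂, ρ₃ ∈ [0,1] satisfy μ₁² + μ₂² + μ₃² − 2(μ₁μ₂+μ₁μ₃+μ₂μ₃) + 4μ₁μ₂μ₃ = 0, and set S = μ₁+μ₂+μ₃, T = ρ₁+ρ₂+ρ₃, μ̃ᵢ = 1−μᵢ, ρ̃ᵢ = 1−ρᵢ. Suppose additionally S ≥ 2. Then μ₁μ₂μ₃ + μ̃₁μ̃₂μ̃₃(−1+T) − μ̃₁μ̃₂μ₃ρ₃ − μ̃₁μ₂μ̃₃ρ₂ − μ₁μ̃₂μ̃₃ρ₁ = (1/4)[(S−2)(S+2) + (S−2)²T + 4(μ̃₁μ̃₂μ₃ρ̃₃ + μ̃₁μ₂μ̃₃ρ̃₂ + μ₁μ̃₂μ̃₃ρ̃₁)],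 and in particular this quantity is nonnegative, and it is strictly positive if S > 2. -/
theorem detA4_formula (μ₁ μ₂ μ₃ ρ₁ ρ₂ ρ₃ : ℝ)
    (hμ₁ : μ₁ ∈ Set.Icc (0:ℝ) 1) (hμ₂ : μ₂ ∈ Set.Icc (0:ℝ) 1) (hμ₃ : μ₃ ∈ Set.Icc (0:ℝ) 1)
    (hρ₁ : ρ₁ ∈ Set.Icc (0:ℝ) 1) (hρ₂ : ρ₂ ∈ Set.Icc (0:ℝ) 1) (hρ₃ : ρ₃ ∈ Set.Icc (0:ℝ) 1)
    (hcon : μ₁^2 + μ₂^2 + μ₃^2 - 2*(μ₁*μ₂ + μ₁*μ₃ + μ₂*μ₃) + 4*μ₁*μ₂*μ₃ = 0)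
    (hS : 2 ≤ μ₁ + μ₂ + μ₃) :
    (μ₁*μ₂*μ₃ + (1-μ₁)*(1-μ₂)*(1-μ₃)*(-1 + (ρ₁+ρ₂+ρ₃))
        - (1-μ₁)*(1-μ₂)*μ₃*ρ₃ - (1-μ₁)*μ₂*(1-μ₃)*ρ₂ - μ₁*(1-μ₂)*(1-μ₃)*ρ₁
      = (1/4)*((μ₁+μ₂+μ₃-2)*(μ₁+μ₂+μ₃+2) + (μ₁+μ₂+μ₃-2)^2*(ρ₁+ρ₂+ρ₃)
          + 4*((1-μ₁)*(1-μ₂)*μ₃*(1-ρ₃) + (1-μ₁)*μ₂*(1-μ₃)*(1-ρ₂)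
            + μ₁*(1-μ₂)*(1-μ₃)*(1-ρ₁))))
    ∧ 0 ≤ μ₁*μ₂*μ₃ + (1-μ₁)*(1-μ₂)*(1-μ₃)*(-1 + (ρ₁+ρ₂+ρ₃))
        - (1-μ₁)*(1-μ₂)*μ₃*ρ₃ - (1-μ₁)*μ₂*(1-μ₃)*ρ₂ - μ₁*(1-μ₂)*(1-μ₃)*ρ₁
    ∧ (2 < μ₁ + μ₂ + μ₃ →
        0 < μ₁*μ₂*μ₃ + (1-μ₁)*(1-μ₂)*(1-μ₃)*(-1 + (ρ₁+ρ₂+ρ₃))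
          - (1-μ₁)*(1-μ₂)*μ₃*ρ₃ - (1-μ₁)*μ₂*(1-μ₃)*ρ₂ - μ₁*(1-μ₂)*(1-μ₃)*ρ₁) := by
  obtain ⟨a1, b1⟩ := hμ₁
  obtain ⟨a2, b2⟩ := hμ₂
  obtain ⟨a3, b3⟩ := hμ₃
  obtain ⟨c1, d1⟩ := hρ₁
  obtain ⟨c2, d2⟩ := hρ₂
  obtain ⟨c3, d3⟩ := hρ₃
  have heq : (μ₁*μ₂*μ₃ + (1-μ₁)*(1-μ₂)*(1-μ₃)*(-1 + (ρ₁+ρ₂+ρ₃))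
        - (1-μ₁)*(1-μ₂)*μ₃*ρ₃ - (1-μ₁)*μ₂*(1-μ₃)*ρ₂ - μ₁*(1-μ₂)*(1-μ₃)*ρ₁
      = (1/4)*((μ₁+μ₂+μ₃-2)*(μ₁+μ₂+μ₃+2) + (μ₁+μ₂+μ₃-2)^2*(ρ₁+ρ₂+ρ₃)
          + 4*((1-μ₁)*(1-μ₂)*μ₃*(1-ρ₃) + (1-μ₁)*μ₂*(1-μ₃)*(1-ρ₂)
            + μ₁*(1-μ₂)*(1-μ₃)*(1-ρ₁)))) := by
    linear_combination (-(1+ρ₁+ρ₂+ρ₃)/4) * hcon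
  have t3 : 0 ≤ (1-μ₁)*(1-μ₂)*μ₃*(1-ρ₃) := by
    apply mul_nonneg (mul_nonneg (mul_nonneg (by linarith) (by linarith)) a3) (by linarith)
  have t2 : 0 ≤ (1-μ₁)*μ₂*(1-μ₃)*(1-ρ₂) := by
    apply mul_nonneg (mul_nonneg (mul_nonneg (by linarith) a2) (by linarith)) (by linarith)
  have t1 : 0 ≤ μ₁*(1-μ₂)*(1-μ₃)*(1-ρ₁) := by
    apply mul_nonneg (mul_nonneg (mul_nonneg a1 (by linarith)) (by linarith)) (by linarith)
  have tT : 0 ≤ (μ₁+μ₂+μ₃-2)^2*(ρ₁+ρ₂+ρ₃) :=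
    mul_nonneg (sq_nonneg _) (by linarith)
  refine ⟨heq, ?_, ?_⟩
  · rw [heq]
    have h1 : 0 ≤ (μ₁+μ₂+μ₃-2)*(μ₁+μ₂+μ₃+2) :=
      mul_nonneg (by linarith) (by linarith)
    linarith
  · intro hS'
    rw [heq]
    have h1 : 0 < (μ₁+μ₂+μ₃-2)*(μ₁+μ₂+μ₃+2) :=
      mul_pos (by linarith) (by linarith)
    linarith
end
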